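/- Let O = (O_1, ..., O_n) be an envy-freeable allocation of indivisible items and, for each agent i, let ℓ(i) denote the maximum total weight of any directed path starting at i in the envy graph G_O (where the empty path has weight 0). Then setting p_i = ℓ(i) for every agent i yields an envy-free allocation with payments (O, p), and moreover this payment vector minimizes the total subsidy: for any payment vector q ∈ ℝ^n_{≥0} such that (O, q) is envy-free, Σ_i ℓ(i) ≤ Σ_i q_i. -/
import Mathlib


open Finset

/-- The bundle of agent `i` under the assignment `f` of items to agents;
an assignment `f : Fin m → Fin n` encodes a complete allocation. -/
def bundle {n m : ℕ} (f : Fin m → Fin n) (i : Fin n) : Finset (Fin m) :=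
  Finset.univ.filter fun o => f o = i

/-- `maxPathWeight n m u A i` is the maximum total weight of a directed path starting at
agent `i` in the envy graph of the allocation `A` (edge `(j, j')` has weight
`u j (A j') - u j (A j)`).  A path is a sequence of distinct agents starting at `i`;
the trivial path (`k = 0`) has weight `0`.  Since there are finitely many paths and the
trivial path exists, the supremum below is attained, i.e., it is the maximum. -/
noncomputable def maxPathWeight (n m : ℕ) (u : Fin n → Finset (Fin m) → ℝ)
    (A : Fin n → Finset (Fin m)) (i : Fin n) : ℝ :=
  sSup {x : ℝ | ∃ (k : ℕ) (c : Fin (k + 1) → Fin n), Function.Injective c ∧ c 0 = i ∧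
    x = ∑ t : Fin k,
      (u (c t.castSucc) (A (c t.succ)) - u (c t.castSucc) (A (c t.castSucc)))}

private lemma tele_bound {n m : ℕ} (u : Fin n → Finset (Fin m) → ℝ)
    (A : Fin n → Finset (Fin m)) (q : Fin n → ℝ)
    (hq : ∀ i j : Fin n, u i (A i) + q i ≥ u i (A j) + q j)
    (C : ℕ → Fin n) (k : ℕ) :
    ∑ t ∈ Finset.range k, (u (C t) (A (C (t+1))) - u (C t) (A (C t))) ≤ q (C 0) - q (C k) := by
  calc ∑ t ∈ Finset.range k, (u (C t) (A (C (t+1))) - u (C t) (A (C t)))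
      ≤ ∑ t ∈ Finset.range k, (q (C t) - q (C (t+1))) := by
        refine Finset.sum_le_sum fun t _ => ?_
        have := hq (C t) (C (t+1)); linarith
    _ = q (C 0) - q (C k) := Finset.sum_range_sub' (fun t => q (C t)) k

theorem maxpath_payments_envy_free_and_optimal (n m : ℕ)
    (u : Fin n → Finset (Fin m) → ℝ) (hu0 : ∀ i, u i ∅ = 0)
    (f : Fin m → Fin n)
    (hef : ∃ p : Fin n → ℝ, (∀ i, 0 ≤ p i) ∧
      ∀ i j : Fin n, u i (bundle f i) + p i ≥ u i (bundle f j) + p j) :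
    (∀ i, 0 ≤ maxPathWeight n m u (bundle f) i) ∧
    (∀ i j : Fin n,
      u i (bundle f i) + maxPathWeight n m u (bundle f) i ≥
        u i (bundle f j) + maxPathWeight n m u (bundle f) j) ∧
    (∀ q : Fin n → ℝ, (∀ i, 0 ≤ q i) →
      (∀ i j : Fin n, u i (bundle f i) + q i ≥ u i (bundle f j) + q j) →
      ∑ i : Fin n, maxPathWeight n m u (bundle f) i ≤ ∑ i : Fin n, q i) := by
  obtain ⟨p, hp0, hp⟩ := hef
  set A : Fin n → Finset (Fin m) := bundle f with hA
  set S : Fin n → Set ℝ := fun i =>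
    {x : ℝ | ∃ (k : ℕ) (c : Fin (k + 1) → Fin n), Function.Injective c ∧ c 0 = i ∧
      x = ∑ t : Fin k,
        (u (c t.castSucc) (A (c t.succ)) - u (c t.castSucc) (A (c t.castSucc)))} with hS
  have hmax : ∀ i, maxPathWeight n m u A i = sSup (S i) := fun i => rfl
  -- the trivial path
  have h0mem : ∀ i, (0:ℝ) ∈ S i := by
    intro i
    exact ⟨0, fun _ => i, fun a b _ => Fin.ext (by omega), rfl, by simp⟩
  -- converting Fin sums to range sums
  -- upper bound lemma
  have hub : ∀ (q : Fin n → ℝ), (∀ i, 0 ≤ q i) →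
      (∀ i j : Fin n, u i (A i) + q i ≥ u i (A j) + q j) →
      ∀ i, ∀ x ∈ S i, x ≤ q i := by
    rintro q hq0 hq i x ⟨k, c, hinj, hc0, rfl⟩
    set C : ℕ → Fin n := fun t => c ⟨min t k, Nat.lt_succ_of_le (min_le_right _ _)⟩ with hCdef
    have hC : ∀ (t : ℕ) (h : t < k + 1), C t = c ⟨t, h⟩ := by
      intro t h
      simp only [hCdef]
      congr 1
      exact Fin.ext (by simp; omega)
    have hsum : ∑ t : Fin k,
        (u (c t.castSucc) (A (c t.succ)) - u (c t.castSucc) (A (c t.castSucc)))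
        = ∑ t ∈ Finset.range k, (u (C t) (A (C (t+1))) - u (C t) (A (C t))) := by
      rw [← Fin.sum_univ_eq_sum_range]
      refine Finset.sum_congr rfl fun t _ => ?_
      have h1 : C t = c t.castSucc := by
        rw [hC t (by omega)]; rfl
      have h2 : C (t + 1) = c t.succ := by
        rw [hC (t+1) (by omega)]; rfl
      rw [h1, h2]
    rw [hsum]
    have := tele_bound u A q hq C k
    have hC0 : C 0 = i := by rw [hC 0 (by omega), ← hc0]; exact congrArg c (Fin.ext (by simp))
    have : q (C k) ≥ 0 := hq0 _
    have := tele_bound u A q hq C k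
    rw [hC0] at this
    linarith
  have hbdd : ∀ i, BddAbove (S i) := fun i => ⟨p i, fun x hx => hub p hp0 hp i x hx⟩
  have hnonneg : ∀ i, 0 ≤ sSup (S i) := fun i => le_csSup (hbdd i) (h0mem i)
  refine ⟨fun i => hnonneg i, ?_, ?_⟩
  · -- envy-freeness
    intro i j
    rcases eq_or_ne i j with rfl | hij
    · exact le_refl _
    rw [hmax, hmax]
    have key : sSup (S j) ≤ sSup (S i) - (u i (A j) - u i (A i)) := by
      refine csSup_le ⟨0, h0mem j⟩ ?_
      rintro x ⟨k, c, hinj, hc0, rfl⟩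
      set C : ℕ → Fin n := fun t => c ⟨min t k, Nat.lt_succ_of_le (min_le_right _ _)⟩ with hCdef
      have hC : ∀ (t : ℕ) (h : t < k + 1), C t = c ⟨t, h⟩ := by
        intro t h
        simp only [hCdef]
        exact congrArg c (Fin.ext (by simp [Nat.min_eq_left (by omega : t ≤ k)]))
      have hC0 : C 0 = j := by rw [hC 0 (by omega), ← hc0]; exact congrArg c (Fin.ext (by simp))
      have hsum : ∑ t : Fin k,
          (u (c t.castSucc) (A (c t.succ)) - u (c t.castSucc) (A (c t.castSucc)))
          = ∑ t ∈ Finset.range k, (u (C t) (A (C (t+1))) - u (C t) (A (C t))) := by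
        rw [← Fin.sum_univ_eq_sum_range]
        refine Finset.sum_congr rfl fun t _ => ?_
        have h1 : C t = c t.castSucc := by rw [hC t (by omega)]; rfl
        have h2 : C (t + 1) = c t.succ := by rw [hC (t+1) (by omega)]; rfl
        rw [h1, h2]
      rw [hsum]
      by_cases hmem : ∃ t, c t = i
      · -- i is on the path: split at i
        obtain ⟨⟨a, ha⟩, hca⟩ := hmem
        have ha' : a ≤ k := Nat.lt_succ_iff.mp ha
        have hane : a ≠ 0 := by
          intro h; subst h
          apply hij
          rw [← hca, ← hc0]
          congr 1
        set k' := k - a with hk'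
        have hkk : k = a + k' := by omega
        -- prefix bound
        have hpre : ∑ t ∈ Finset.range a, (u (C t) (A (C (t+1))) - u (C t) (A (C t)))
            ≤ p (C 0) - p (C a) := tele_bound u A p hp C a
        have hCa : C a = i := by rw [hC a ha]; exact hca
        rw [hC0, hCa] at hpre
        -- suffix is a path from i
        have hsplit : ∑ t ∈ Finset.range k, (u (C t) (A (C (t+1))) - u (C t) (A (C t)))
            = (∑ t ∈ Finset.range a, (u (C t) (A (C (t+1))) - u (C t) (A (C t))))
              + ∑ t ∈ Finset.range k', (u (C (a+t)) (A (C (a+t+1))) - u (C (a+t)) (A (C (a+t)))) := by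
          rw [hkk, Finset.sum_range_add]
        set D : Fin (k' + 1) → Fin n := fun s => c ⟨a + s.val, by omega⟩ with hDdef
        have hDinj : Function.Injective D := by
          intro s t hst
          have := hinj hst
          have : a + s.val = a + t.val := congrArg Fin.val this
          exact Fin.ext (by omega)
        have hD0 : D 0 = i := by rw [← hca]; exact congrArg c (Fin.ext (by simp))
        have hsuflem : ∑ t ∈ Finset.range k', (u (C (a+t)) (A (C (a+t+1))) - u (C (a+t)) (A (C (a+t))))
            = ∑ t : Fin k', (u (D t.castSucc) (A (D t.succ)) - u (D t.castSucc) (A (D t.castSucc))) := by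
          rw [← Fin.sum_univ_eq_sum_range]
          refine Finset.sum_congr rfl fun t _ => ?_
          have h1 : C (a + t.val) = D t.castSucc := by
            rw [hC (a + t.val) (by omega)]
            exact congrArg c (Fin.ext (by simp))
          have h2 : C (a + t.val + 1) = D t.succ := by
            rw [hC (a + t.val + 1) (by omega)]
            exact congrArg c (Fin.ext (by simp [Nat.add_assoc]))
          rw [h1, h2]
        have hsufmem : (∑ t : Fin k', (u (D t.castSucc) (A (D t.succ)) - u (D t.castSucc) (A (D t.castSucc)))) ∈ S i :=
          ⟨k', D, hDinj, hD0, rfl⟩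
        have hsufle : (∑ t : Fin k', (u (D t.castSucc) (A (D t.succ)) - u (D t.castSucc) (A (D t.castSucc)))) ≤ sSup (S i) :=
          le_csSup (hbdd i) hsufmem
        have hw : u i (A j) - u i (A i) ≤ p i - p j := by have := hp i j; linarith
        rw [hsplit, hsuflem]
        linarith
      · -- i not on the path: prepend i
        push_neg at hmem
        set c' : Fin (k + 1 + 1) → Fin n := Fin.cases i c with hc'def
        have hinj' : Function.Injective c' := by
          intro a b hab
          induction a using Fin.cases with
          | zero =>
            induction b using Fin.cases with
            | zero => rfl
            | succ b => simp only [hc'def, Fin.cases_zero, Fin.cases_succ] at hab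
                        exact absurd hab.symm (hmem b)
          | succ a =>
            induction b using Fin.cases with
            | zero => simp only [hc'def, Fin.cases_zero, Fin.cases_succ] at hab
                      exact absurd hab (hmem a)
            | succ b => simp only [hc'def, Fin.cases_succ] at hab
                        exact congrArg Fin.succ (hinj hab)
        have hnewsum : (∑ t : Fin (k+1), (u (c' t.castSucc) (A (c' t.succ)) - u (c' t.castSucc) (A (c' t.castSucc))))
            = (u i (A j) - u i (A i)) + ∑ t : Fin k,
              (u (c t.castSucc) (A (c t.succ)) - u (c t.castSucc) (A (c t.castSucc))) := by
          rw [Fin.sum_univ_succ]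
          have e0 : c' (0 : Fin (k+1)).castSucc = i := by
            simp [hc'def]
          have e1 : c' (0 : Fin (k+1)).succ = j := by
            rw [← hc0]; exact Fin.cases_succ 0
          have hrest : ∑ t : Fin k,
              (u (c' t.succ.castSucc) (A (c' t.succ.succ)) - u (c' t.succ.castSucc) (A (c' t.succ.castSucc)))
              = ∑ t : Fin k,
              (u (c t.castSucc) (A (c t.succ)) - u (c t.castSucc) (A (c t.castSucc))) := by
            refine Finset.sum_congr rfl fun t _ => ?_
            have e2 : c' t.succ.castSucc = c t.castSucc := by
              rw [← Fin.succ_castSucc]; exact Fin.cases_succ _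
            have e3 : c' t.succ.succ = c t.succ := Fin.cases_succ _
            rw [e2, e3]
          rw [e0, e1, hrest]
        have hmem' : ((u i (A j) - u i (A i)) + ∑ t : Fin k,
              (u (c t.castSucc) (A (c t.succ)) - u (c t.castSucc) (A (c t.castSucc)))) ∈ S i := by
          refine ⟨k + 1, c', hinj', ?_, hnewsum.symm⟩
          simp [hc'def]
        have := le_csSup (hbdd i) hmem'
        rw [hsum] at this
        linarith
    linarith
  · -- optimality
    intro q hq0 hq
    refine Finset.sum_le_sum fun i _ => ?_
    rw [hmax]
    exact csSup_le ⟨0, h0mem i⟩ (fun x hx => hub q hq0 hq i x hx)
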